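/- Let A_1, …, A_k be pairwise commuting N×N matrices with nonnegative integer entries and no zero rows forming an irreducible family, let ρ_i be the spectral radius of A_i, let x ∈ (0,∞)^N be the unimodular Perron–Frobenius eigenvector, and suppose ρ_i > 1 for all 1 ≤ i ≤ k. Fix δ ∈ (0,1). Then the infinite path space X_B of the associated stationary k-Bratteli diagram, equipped with the metric d_δ = d_{w_δ}, is an ultrametric Cantor set: X_B is nonempty, compact, perfect, and totally disconnected, d_δ is a metric satisfying d_δ(x,y) ≤ max{d_δ(x,z), d_δ(z,y)} for all x, y, z, and d_δ induces the cylinder-set topology on X_B. -/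

import Mathlib

open scoped Classical ENNReal Topology
open TopologicalSpace MeasureTheory Filter Set
open Fin.NatCast

namespace KBratteli

variable (k N : ℕ) [NeZero k] (A : Fin k → Matrix (Fin N) (Fin N) ℕ)

/-- An edge at level `n` of the stationary `k`-Bratteli diagram of the matrices
`A 0, …, A (k-1)`: an element of `Edge k N A n` is an edge whose source lies in the
level-`(n+1)` vertex set and whose range lies in the level-`n` vertex set (both copies of
`Fin N`); there are exactly `A (n % k) p q` edges with range `p` and source `q`. -/
structure Edge (n : ℕ) : Type where
  rg : Fin N
  src : Fin N
  idx : Fin (A (n : Fin k) rg src)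

/-- The infinite path space `X_B` of the stationary `k`-Bratteli diagram of `A`. -/
def PathSpace : Type :=
  { x : (n : ℕ) → Edge k N A n // ∀ n, (x n).src = (x (n + 1)).rg }

/-- A finite path of length `ℓ` beginning at level `0`: a composable string of edges,
together with the vertices it visits.  Length-`0` paths are vertices of `V₀`. -/
structure FinPath (ℓ : ℕ) : Type where
  vtx : Fin (ℓ + 1) → Fin N
  edge : (i : Fin ℓ) → Edge k N A i
  rg_eq : ∀ i : Fin ℓ, (edge i).rg = vtx i.castSucc
  src_eq : ∀ i : Fin ℓ, (edge i).src = vtx i.succ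

/-- `FB`: the set of all finite paths (of all lengths) beginning at level `0`. -/
abbrev FB : Type := Σ ℓ : ℕ, FinPath k N A ℓ

variable {k N A}

/-- The source (final) vertex of a finite path. -/
def FinPath.src {ℓ : ℕ} (lam : FinPath k N A ℓ) : Fin N := lam.vtx (Fin.last ℓ)

/-- The range (initial, level-0) vertex of a finite path. -/
def FinPath.rg {ℓ : ℕ} (lam : FinPath k N A ℓ) : Fin N := lam.vtx 0

/-- The length-0 finite path at the level-0 vertex `v`. -/
def vertexPath (v : Fin N) : FinPath k N A 0 where
  vtx := fun _ => v
  edge := fun i => i.elim0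
  rg_eq := fun i => i.elim0
  src_eq := fun i => i.elim0

/-- The cylinder set `[λ]` of a finite path `λ`: all infinite paths with initial
segment `λ`. -/
def Cyl {ℓ : ℕ} (lam : FinPath k N A ℓ) : Set (PathSpace k N A) :=
  { x | (x.1 0).rg = lam.rg ∧ ∀ i : Fin ℓ, x.1 i = lam.edge i }

variable (k N A) in
/-- The collection of all cylinder sets. -/
def cylinderSets : Set (Set (PathSpace k N A)) :=
  { S | ∃ (ℓ : ℕ) (lam : FinPath k N A ℓ), S = Cyl lam }

/-- The cylinder-set topology on the infinite path space. -/
instance : TopologicalSpace (PathSpace k N A) :=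
  generateFrom (cylinderSets k N A)

/-- The Borel σ-algebra of the cylinder-set topology. -/
instance : MeasurableSpace (PathSpace k N A) := borel _

instance : BorelSpace (PathSpace k N A) := ⟨rfl⟩

lemma isOpen_cyl {ℓ : ℕ} (lam : FinPath k N A ℓ) : IsOpen (Cyl lam) :=
  isOpen_generateFrom_of_mem ⟨ℓ, lam, rfl⟩

lemma measurableSet_cyl {ℓ : ℕ} (lam : FinPath k N A ℓ) : MeasurableSet (Cyl lam) :=
  (isOpen_cyl lam).measurableSet

/-- Edges form a finite type. -/
def edgeEquiv (n : ℕ) : Edge k N A n ≃ Σ p : Fin N, Σ q : Fin N, Fin (A (n : Fin k) p q) where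
  toFun e := ⟨e.rg, e.src, e.idx⟩
  invFun t := ⟨t.1, t.2.1, t.2.2⟩
  left_inv e := rfl
  right_inv t := rfl

instance (n : ℕ) : Finite (Edge k N A n) := by
  haveI : ∀ p : Fin N, Finite (Σ q : Fin N, Fin (A (n : Fin k) p q)) := fun p => inferInstance
  exact Finite.of_equiv _ (edgeEquiv n).symm

instance (ℓ : ℕ) : Finite (FinPath k N A ℓ) := by
  have hinj : Function.Injective
      (fun lam : FinPath k N A ℓ => (lam.vtx, lam.edge)) := by
    rintro ⟨v, e, h1, h2⟩ ⟨v', e', h1', h2'⟩ h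
    simp only [Prod.mk.injEq] at h
    obtain ⟨hv, he⟩ := h
    subst hv; subst he; rfl
  exact Finite.of_injective _ hinj

instance : Countable (FB k N A) := by infer_instance

/-- The initial segment of length `m` of an infinite path. -/
def prefixPath (x : PathSpace k N A) (m : ℕ) : FinPath k N A m where
  vtx := fun i => (x.1 i).rg
  edge := fun i => x.1 i
  rg_eq := fun _ => rfl
  src_eq := fun i => x.2 i

lemma mem_cyl_prefixPath (x : PathSpace k N A) (m : ℕ) : x ∈ Cyl (prefixPath x m) :=
  ⟨rfl, fun _ => rfl⟩

lemma measurableSet_coord (j : ℕ) (P : Edge k N A j → Prop) :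
    MeasurableSet { x : PathSpace k N A | P (x.1 j) } := by
  have h : { x : PathSpace k N A | P (x.1 j) }
      = ⋃ (lam : FinPath k N A (j + 1)) (_ : P (lam.edge (Fin.last j))), Cyl lam := by
    ext x
    simp only [Set.mem_setOf_eq, Set.mem_iUnion]
    constructor
    · intro hx
      exact ⟨prefixPath x (j + 1), hx, mem_cyl_prefixPath x (j + 1)⟩
    · rintro ⟨lam, hP, -, hedge⟩
      have hx : x.1 j = lam.edge (Fin.last j) := hedge (Fin.last j)
      rw [hx]; exact hP
  rw [h]
  exact MeasurableSet.iUnion fun lam => MeasurableSet.iUnion fun _ => measurableSet_cyl lam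

/-- The first level at which two infinite paths differ. -/
noncomputable def firstDiff (x y : PathSpace k N A) : ℕ := sInf { n | x.1 n ≠ y.1 n }

/-- The function `d_w` associated to a weight-type function `w` on finite paths:
`d_w(x,x) = 0`; `d_w(x,y) = 1` if `x` and `y` have no common initial sub-path (i.e. they
do not even start at the same level-0 vertex); and otherwise `d_w(x,y) = w(x ∧ y)`, the
value of `w` on the longest common initial sub-path of `x` and `y`. -/
noncomputable def distW (w : FB k N A → ℝ) (x y : PathSpace k N A) : ℝ :=
  if x = y then 0
  else if (x.1 0).rg = (y.1 0).rg then w ⟨firstDiff x y, prefixPath x (firstDiff x y)⟩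
  else 1

/-- `η` is an (initial) sub-path of `λ`. -/
def IsSubPath {m ℓ : ℕ} (η : FinPath k N A m) (lam : FinPath k N A ℓ) : Prop :=
  ∃ h : m ≤ ℓ, η.rg = lam.rg ∧ ∀ i : Fin m, η.edge i = lam.edge (Fin.castLE h i)

/-- `lam ∈ F_γ B` : the finite path `lam` extends `γ`. -/
def Extends {m : ℕ} (γ : FinPath k N A m) (lam : FB k N A) : Prop :=
  IsSubPath γ lam.2

/-- The spectral radius of a matrix of nonnegative integers, as a real number. -/
noncomputable def specRad {N : ℕ} (M : Matrix (Fin N) (Fin N) ℕ) : ℝ :=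
  (spectralRadius ℂ (M.map (Nat.cast : ℕ → ℂ))).toReal

/-- The weight `w_δ` on the stationary `k`-Bratteli diagram of `A`, relative to data
`ρ : Fin k → ℝ` (the spectral radii) and `xv : Fin N → ℝ` (the Perron–Frobenius
eigenvector): on a path `η` of length `q·k + t` (`0 ≤ t ≤ k-1`) it is
`(ρ₁^{q+1} ⋯ ρ_t^{q+1} · ρ_{t+1}^q ⋯ ρ_k^q)^{-1/δ} · xv (s η)`. -/
noncomputable def wt (δ : ℝ) (ρ : Fin k → ℝ) (xv : Fin N → ℝ) (lam : FB k N A) : ℝ :=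
  (∏ i : Fin k, ρ i ^ (if (i : ℕ) < lam.1 % k then lam.1 / k + 1 else lam.1 / k))
      ^ (-(1 / δ)) * xv lam.2.src

/-- The value `M([λ]) = (ρ₁⋯ρ_t)^{-(q+1)} (ρ_{t+1}⋯ρ_k)^{-q} · x_{s(λ)}` of the
measure `M` on the cylinder set of a path of length `q·k + t`. -/
noncomputable def Mval (ρ : Fin k → ℝ) (xv : Fin N → ℝ) (lam : FB k N A) : ℝ :=
  (∏ i : Fin k, ρ i ^ (if (i : ℕ) < lam.1 % k then lam.1 / k + 1 else lam.1 / k))⁻¹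
    * xv lam.2.src

/-- A family of matrices is irreducible if for every pair of indices some finite product
of matrices from the family has positive corresponding entry. -/
def IrreducibleFamily {k N : ℕ} (A : Fin k → Matrix (Fin N) (Fin N) ℕ) : Prop :=
  ∀ a b : Fin N, ∃ l : List (Fin k), 0 < (l.map A).prod a b

/-- A single square matrix with nonnegative integer entries is irreducible if for every
pair of indices some positive power has positive corresponding entry. -/
def MatIrreducible {N : ℕ} (B : Matrix (Fin N) (Fin N) ℕ) : Prop :=
  ∀ a b : Fin N, ∃ m : ℕ, 0 < m ∧ 0 < (B ^ m) a b

/-- The diameter (in `ℝ≥0∞`) of a set of infinite paths relative to `d_w`. -/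
noncomputable def diamW (w : FB k N A → ℝ) (U : Set (PathSpace k N A)) : ℝ≥0∞ :=
  ⨆ (x) (_ : x ∈ U) (y) (_ : y ∈ U), ENNReal.ofReal (distW w x y)

/-- The `t`-dimensional Hausdorff (outer) measure of a set `Z` relative to the metric
`d_w`: `H^t(Z) = lim_{ε → 0} inf { Σᵢ (diam Uᵢ)^t : Z ⊆ ⋃ᵢ Uᵢ, diam Uᵢ < ε }`. -/
noncomputable def hausW (w : FB k N A → ℝ) (t : ℝ) (Z : Set (PathSpace k N A)) : ℝ≥0∞ :=
  ⨆ (ε : ℝ≥0∞) (_ : 0 < ε),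
    ⨅ (U : ℕ → Set (PathSpace k N A)) (_ : Z ⊆ ⋃ n, U n)
      (_ : ∀ n, diamW w (U n) < ε), ∑' n, diamW w (U n) ^ t

lemma natCast_mul_add (n i : ℕ) : ((n * k + i : ℕ) : Fin k) = (i : Fin k) := by
  push_cast
  simp [Fin.natCast_self]

/-- Transport of edges between levels governed by the same matrix (the diagram is
stationary with period `k`). -/
def Edge.cast {i j : ℕ} (h : (i : Fin k) = (j : Fin k)) (e : Edge k N A i) :
    Edge k N A j where
  rg := e.rg
  src := e.src
  idx := Fin.cast (by rw [h]) e.idx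

/-- The cylinder set `[γ e]` of a finite path `γ` (of length `m`) extended by one
further edge `e` at level `m`. -/
def cylExt {m : ℕ} (γ : FinPath k N A m) (e : Edge k N A m) : Set (PathSpace k N A) :=
  Cyl γ ∩ { x | x.1 m = e }

lemma measurableSet_cylExt {m : ℕ} (γ : FinPath k N A m) (e : Edge k N A m) :
    MeasurableSet (cylExt γ e) :=
  (measurableSet_cyl γ).inter (measurableSet_coord m fun f => f = e)

/-- The cylinder set `[λ μ]` of the concatenation of `λ ∈ F^{nk}B` with `μ ∈ F^{k}B`
(the diagram being stationary of period `k`, `μ` concatenates onto `λ`). -/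
def cylCat {n : ℕ} (lam : FinPath k N A (n * k)) (η : FinPath k N A k) :
    Set (PathSpace k N A) :=
  Cyl lam ∩ { x | (x.1 (n * k)).rg = η.rg } ∩
    ⋂ i : Fin k,
      { x | x.1 (n * k + (i : ℕ)) = Edge.cast (natCast_mul_add n (i : ℕ)).symm (η.edge i) }

lemma measurableSet_cylCat {n : ℕ} (lam : FinPath k N A (n * k)) (η : FinPath k N A k) :
    MeasurableSet (cylCat lam η) :=
  ((measurableSet_cyl lam).inter
      (measurableSet_coord (n * k) (fun e => e.rg = η.rg))).inter
    (MeasurableSet.iInter fun i => measurableSet_coord (n * k + (i : ℕ))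
      (fun e => e = Edge.cast (natCast_mul_add n (i : ℕ)).symm (η.edge i)))



end KBratteli

/-!
The weight `w_δ` decreases geometrically along every infinite path: the eigenvector equation
gives `x_{s(e)} ≤ ρ_n x_{r(e)}` for an edge `e` at level `n`, so one more edge multiplies the
weight by at most `ρ_n ^ (1 - 1/δ) < 1`. Hence `d_δ` is an ultrametric whose balls are unions of
cylinders and vice versa. Compactness and total disconnectedness come from the closed embedding
of `X_B` into the product of the finite discrete edge sets. A point is not isolated because
along every path some vertex has at least two outgoing edges: otherwise the eigenvector equation
would force `x` to grow by a factor `min ρ_i > 1` at every further level, but `x` is bounded.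
-/

namespace KBratteli

open Topology

variable {k N : ℕ} {A : Fin k → Matrix (Fin N) (Fin N) ℕ}

lemma sum_mul_eq_of_mulVec_eq {M : Matrix (Fin N) (Fin N) ℕ} {x : Fin N → ℝ} {r : ℝ}
    (h : (M.map (Nat.cast : ℕ → ℝ)).mulVec x = r • x) (v : Fin N) :
    ∑ b, (M v b : ℝ) * x b = r * x v := by
  simpa [Matrix.mulVec, dotProduct] using congrFun h v

/-- `ρ_0 ρ_1 ⋯ ρ_{n-1}` (indices mod `k`), written as in the definition of `wt`. -/
def radiusProd (ρ : Fin k → ℝ) (n : ℕ) : ℝ :=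
  ∏ i : Fin k, ρ i ^ (if (i : ℕ) < n % k then n / k + 1 else n / k)

lemma one_le_radiusProd {ρ : Fin k → ℝ} (hρ : ∀ i, 1 ≤ ρ i) (n : ℕ) : 1 ≤ radiusProd ρ n :=
  Finset.one_le_prod fun i _ => one_le_pow₀ (hρ i)

variable [NeZero k]

section Prefixes

lemma mem_cyl_prefixPath_iff {p q : PathSpace k N A} {m : ℕ} :
    q ∈ Cyl (prefixPath p m) ↔ (q.1 0).rg = (p.1 0).rg ∧ ∀ i < m, q.1 i = p.1 i :=
  ⟨fun ⟨h0, he⟩ => ⟨h0, fun i hi => he ⟨i, hi⟩⟩, fun ⟨h0, he⟩ => ⟨h0, fun i => he i i.2⟩⟩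

lemma cyl_prefixPath_subset {ℓ : ℕ} {lam : FinPath k N A ℓ} {p : PathSpace k N A}
    (hp : p ∈ Cyl lam) {m : ℕ} (hm : ℓ ≤ m) : Cyl (prefixPath p m) ⊆ Cyl lam := by
  intro q hq
  rw [mem_cyl_prefixPath_iff] at hq
  refine ⟨hq.1.trans hp.1, fun i => ?_⟩
  rw [hq.2 i (i.2.trans_le hm)]
  exact hp.2 i

lemma cyl_prefixPath_antitone (p : PathSpace k N A) :
    Antitone fun n => Cyl (prefixPath p n) :=
  fun m _ h => cyl_prefixPath_subset (mem_cyl_prefixPath p m) h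

lemma rg_eq_of_eq_of_lt {p q : PathSpace k N A} {n : ℕ} (h0 : (p.1 0).rg = (q.1 0).rg)
    (h : ∀ i < n, p.1 i = q.1 i) : (p.1 n).rg = (q.1 n).rg := by
  cases n with
  | zero => exact h0
  | succ j => rw [← p.2 j, ← q.2 j, h j j.lt_succ_self]

lemma prefixPath_eq_of_mem_cyl {p q : PathSpace k N A} {n : ℕ}
    (hq : q ∈ Cyl (prefixPath p n)) : prefixPath q n = prefixPath p n := by
  obtain ⟨h0, he⟩ := mem_cyl_prefixPath_iff.1 hq
  unfold prefixPath
  congr 1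
  · funext i
    exact rg_eq_of_eq_of_lt h0 fun j hj => he j (hj.trans_le (Nat.lt_succ_iff.1 i.2))
  · funext i
    exact he i i.2

lemma firstDiff_spec {p q : PathSpace k N A} (h : p ≠ q) :
    p.1 (firstDiff p q) ≠ q.1 (firstDiff p q) :=
  Nat.sInf_mem (Function.ne_iff.1 (Subtype.coe_ne_coe.2 h))

lemma apply_eq_of_lt_firstDiff {p q : PathSpace k N A} {i : ℕ} (h : i < firstDiff p q) :
    p.1 i = q.1 i :=
  not_not.1 (Nat.notMem_of_lt_sInf h)

lemma firstDiff_comm (p q : PathSpace k N A) : firstDiff p q = firstDiff q p := by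
  simp only [firstDiff, ne_comm]

lemma le_firstDiff {p q : PathSpace k N A} (hne : p ≠ q) {m : ℕ}
    (h : ∀ i < m, p.1 i = q.1 i) : m ≤ firstDiff p q :=
  not_lt.1 fun hlt => firstDiff_spec hne (h _ hlt)

lemma mem_cyl_prefixPath_firstDiff {p q : PathSpace k N A} (h : (p.1 0).rg = (q.1 0).rg) :
    q ∈ Cyl (prefixPath p (firstDiff p q)) :=
  mem_cyl_prefixPath_iff.2 ⟨h.symm, fun _ hi => (apply_eq_of_lt_firstDiff hi).symm⟩

end Prefixes

section Topology

lemma nhds_basis_cyl_prefixPath (p : PathSpace k N A) :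
    (𝓝 p).HasBasis (fun _ : ℕ => True) fun n => Cyl (prefixPath p n) := by
  have hnhds : 𝓝 p = ⨅ n, 𝓟 (Cyl (prefixPath p n)) := by
    refine le_antisymm (le_iInf fun n => le_principal_iff.2 <|
      (isOpen_cyl _).mem_nhds (mem_cyl_prefixPath p n)) ?_
    refine (le_iInf₂ fun s hs => ?_).trans_eq nhds_generateFrom.symm
    obtain ⟨hps, ℓ, lam, rfl⟩ := hs
    exact iInf_le_of_le ℓ (principal_mono.2 (cyl_prefixPath_subset hps le_rfl))
  rw [hnhds]
  exact hasBasis_iInf_principal (cyl_prefixPath_antitone p).directed_ge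

instance (n : ℕ) : TopologicalSpace (Edge k N A n) := ⊥

instance (n : ℕ) : DiscreteTopology (Edge k N A n) := ⟨rfl⟩

lemma isOpen_setOf_apply_eq (n : ℕ) (e : Edge k N A n) :
    IsOpen {p : PathSpace k N A | p.1 n = e} := by
  refine isOpen_iff_mem_nhds.2 fun p (hp : p.1 n = e) => ?_
  refine (nhds_basis_cyl_prefixPath p).mem_iff.2 ⟨n + 1, trivial, fun q hq => ?_⟩
  exact ((mem_cyl_prefixPath_iff.1 hq).2 n n.lt_succ_self).trans hp

lemma isClosedEmbedding_val :
    IsClosedEmbedding (fun p : PathSpace k N A => p.1) := by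
  have hcont : Continuous (fun p : PathSpace k N A => p.1) :=
    continuous_pi fun n => continuous_discrete_rng.2 (isOpen_setOf_apply_eq n)
  refine ⟨⟨⟨le_antisymm (continuous_iff_le_induced.1 hcont) ?_⟩, fun _ _ => Subtype.ext⟩, ?_⟩
  · refine le_generateFrom fun s ⟨ℓ, lam, hs⟩ => ?_
    have hopen : IsOpen {f : (n : ℕ) → Edge k N A n |
        (f 0).rg = lam.rg ∧ ∀ i : Fin ℓ, f i = lam.edge i} := by
      rw [ofPred_and, ofPred_forall]
      exact ((isOpen_discrete {e : Edge k N A 0 | e.rg = lam.rg}).preimage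
        (continuous_apply 0)).inter (isOpen_iInter_of_finite fun i =>
          (isOpen_discrete {lam.edge i}).preimage (continuous_apply (i : ℕ)))
    exact hs ▸ isOpen_induced hopen
  · have hrange : range (fun p : PathSpace k N A => p.1) =
        ⋂ n, {f | (f n).src = (f (n + 1)).rg} := by
      ext f
      rw [mem_iInter]
      exact ⟨fun ⟨p, hp⟩ => hp ▸ p.2, fun hf => ⟨⟨f, hf⟩, rfl⟩⟩
    rw [hrange]
    exact isClosed_iInter fun n => isClosed_eq
      (continuous_of_discreteTopology.comp (continuous_apply n))
      (continuous_of_discreteTopology.comp (continuous_apply (n + 1)))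

instance : CompactSpace (PathSpace k N A) :=
  isClosedEmbedding_val.compactSpace

instance : TotallyDisconnectedSpace (PathSpace k N A) :=
  isClosedEmbedding_val.isEmbedding.isTotallyDisconnected_range.1
    (isTotallyDisconnected_of_totallyDisconnectedSpace _)

end Topology

section Construction

noncomputable def nextEdge (hrow : ∀ (i : Fin k) (a : Fin N), ∃ b, 0 < A i a b) (n : ℕ)
    (v : Fin N) : Edge k N A n :=
  ⟨v, (hrow _ v).choose, ⟨0, (hrow _ v).choose_spec⟩⟩

lemma exists_path_eq_of_lt (hrow : ∀ (i : Fin k) (a : Fin N), ∃ b, 0 < A i a b) (m : ℕ)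
    (g : ∀ i, Edge k N A i) (hg : ∀ i, i + 1 < m → (g i).src = (g (i + 1)).rg) :
    ∃ y : PathSpace k N A, ∀ i < m, y.1 i = g i := by
  let F : ∀ n, Edge k N A n := fun n => Nat.rec (g 0)
    (fun n fn => if n + 1 < m then g (n + 1) else nextEdge hrow (n + 1) fn.src) n
  have hF : ∀ n < m, F n = g n := by
    rintro (_ | n) hn
    · rfl
    · exact if_pos hn
  refine ⟨⟨F, fun n => ?_⟩, hF⟩
  show (F n).src = (if n + 1 < m then g (n + 1) else nextEdge hrow (n + 1) (F n).src).rg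
  split_ifs with h
  · rw [hF n (by omega)]; exact hg n h
  · rfl

end Construction

structure IsWeight (w : FB k N A → ℝ) : Prop where
  pos : ∀ η, 0 < w η
  le_one : ∀ η, w η ≤ 1
  antitone : ∀ p : PathSpace k N A, Antitone fun n => w ⟨n, prefixPath p n⟩
  tendsto_zero : ∀ p : PathSpace k N A, Tendsto (fun n => w ⟨n, prefixPath p n⟩) atTop (𝓝 0)

section Distance

variable {w : FB k N A → ℝ} {p q r : PathSpace k N A}

lemma distW_self (w : FB k N A → ℝ) (p : PathSpace k N A) : distW w p p = 0 :=
  if_pos rfl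

lemma distW_of_rg_ne (h : (p.1 0).rg ≠ (q.1 0).rg) : distW w p q = 1 := by
  have hne : p ≠ q := by rintro rfl; exact h rfl
  rw [distW, if_neg hne, if_neg h]

lemma distW_of_rg_eq (hne : p ≠ q) (h : (p.1 0).rg = (q.1 0).rg) :
    distW w p q = w ⟨firstDiff p q, prefixPath p (firstDiff p q)⟩ := by
  rw [distW, if_neg hne, if_pos h]

lemma distW_comm (w : FB k N A → ℝ) (p q : PathSpace k N A) : distW w p q = distW w q p := by
  rcases eq_or_ne p q with rfl | hne
  · rfl
  by_cases h : (p.1 0).rg = (q.1 0).rg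
  · rw [distW_of_rg_eq hne h, distW_of_rg_eq hne.symm h.symm, firstDiff_comm q p,
      prefixPath_eq_of_mem_cyl (mem_cyl_prefixPath_firstDiff h)]
  · rw [distW_of_rg_ne h, distW_of_rg_ne (Ne.symm h)]

namespace IsWeight

lemma distW_pos (hw : IsWeight w) (hne : p ≠ q) : 0 < distW w p q := by
  rw [distW, if_neg hne]
  split_ifs
  exacts [hw.pos _, one_pos]

lemma distW_nonneg (hw : IsWeight w) (p q : PathSpace k N A) : 0 ≤ distW w p q := by
  rcases eq_or_ne p q with rfl | hne
  · exact (distW_self w p).ge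
  · exact (hw.distW_pos hne).le

lemma distW_eq_zero_iff (hw : IsWeight w) : distW w p q = 0 ↔ p = q :=
  ⟨fun h => not_not.1 fun hne => (hw.distW_pos hne).ne' h, fun h => h ▸ distW_self w p⟩

lemma distW_le_one (hw : IsWeight w) (p q : PathSpace k N A) : distW w p q ≤ 1 := by
  rw [distW]
  split_ifs
  exacts [zero_le_one, hw.le_one _, le_rfl]

lemma distW_le_of_mem_cyl (hw : IsWeight w) {n : ℕ} (hq : q ∈ Cyl (prefixPath p n)) :
    distW w p q ≤ w ⟨n, prefixPath p n⟩ := by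
  rcases eq_or_ne p q with rfl | hne
  · exact (distW_self w p).trans_le (hw.pos _).le
  obtain ⟨h0, he⟩ := mem_cyl_prefixPath_iff.1 hq
  rw [distW_of_rg_eq hne h0.symm]
  exact hw.antitone p (le_firstDiff hne fun i hi => (he i hi).symm)

lemma mem_cyl_of_distW_lt (hw : IsWeight w) {n : ℕ} (h : distW w p q < w ⟨n, prefixPath p n⟩) :
    q ∈ Cyl (prefixPath p n) := by
  rcases eq_or_ne p q with rfl | hne
  · exact mem_cyl_prefixPath p n
  by_cases h0 : (p.1 0).rg = (q.1 0).rg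
  · rw [distW_of_rg_eq hne h0] at h
    have hn : n ≤ firstDiff p q := not_lt.1 fun hlt => h.not_ge (hw.antitone p hlt.le)
    exact cyl_prefixPath_antitone p hn (mem_cyl_prefixPath_firstDiff h0)
  · rw [distW_of_rg_ne h0] at h
    exact absurd h (hw.le_one _).not_gt

lemma distW_le_max (hw : IsWeight w) (p q r : PathSpace k N A) :
    distW w p q ≤ max (distW w p r) (distW w r q) := by
  rcases eq_or_ne p q with rfl | hpq
  · exact (distW_self w p).trans_le (le_max_of_le_left (hw.distW_nonneg p r))
  rcases eq_or_ne p r with rfl | hpr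
  · exact le_max_right _ _
  rcases eq_or_ne r q with rfl | hrq
  · exact le_max_left _ _
  by_cases hpr0 : (p.1 0).rg = (r.1 0).rg
  swap
  · exact le_max_of_le_left ((distW_of_rg_ne hpr0).symm ▸ hw.distW_le_one p q)
  by_cases hrq0 : (r.1 0).rg = (q.1 0).rg
  swap
  · exact le_max_of_le_right ((distW_of_rg_ne hrq0).symm ▸ hw.distW_le_one p q)
  have hr := mem_cyl_prefixPath_firstDiff hpr0
  have hq := mem_cyl_prefixPath_firstDiff hrq0
  rw [distW_of_rg_eq hpr hpr0, distW_of_rg_eq hrq hrq0]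
  rcases le_total (firstDiff p r) (firstDiff r q) with hab | hba
  · refine le_max_of_le_left (hw.distW_le_of_mem_cyl ?_)
    rw [← prefixPath_eq_of_mem_cyl hr]
    exact cyl_prefixPath_antitone r hab hq
  · refine le_max_of_le_right ?_
    have hpre := prefixPath_eq_of_mem_cyl (cyl_prefixPath_antitone p hba hr)
    rw [hpre] at hq ⊢
    exact hw.distW_le_of_mem_cyl hq

lemma isOpen_ball (hw : IsWeight w) (p : PathSpace k N A) (r : ℝ) :
    IsOpen {q | distW w p q < r} := by
  refine isOpen_iff_mem_nhds.2 fun q (hq : distW w p q < r) => ?_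
  have hr : 0 < r := (hw.distW_nonneg p q).trans_lt hq
  obtain ⟨n, hn⟩ := ((hw.tendsto_zero q).eventually (gt_mem_nhds hr)).exists
  refine (nhds_basis_cyl_prefixPath q).mem_iff.2 ⟨n, trivial, fun z hz => ?_⟩
  exact (hw.distW_le_max p z q).trans_lt (max_lt hq ((hw.distW_le_of_mem_cyl hz).trans_lt hn))

lemma generateFrom_balls_eq (hw : IsWeight w) :
    generateFrom {S : Set (PathSpace k N A) |
        ∃ (p : PathSpace k N A) (r : ℝ), 0 < r ∧ S = {q | distW w p q < r}}
      = generateFrom (cylinderSets k N A) := by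
  refine le_antisymm (le_generateFrom fun s ⟨ℓ, lam, hs⟩ => ?_)
    (le_generateFrom fun s ⟨p, r, _, hs⟩ => hs ▸ hw.isOpen_ball p r)
  have hunion : Cyl lam = ⋃ q : Cyl lam, {z | distW w q z < w ⟨ℓ, prefixPath q ℓ⟩} := by
    refine Subset.antisymm (fun z hz => mem_iUnion.2 ⟨⟨z, hz⟩, ?_⟩) (iUnion_subset fun q z hz => ?_)
    · exact (distW_self w z).trans_lt (hw.pos _)
    · exact cyl_prefixPath_subset q.2 le_rfl (hw.mem_cyl_of_distW_lt hz)
  rw [hs, hunion]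
  exact @isOpen_iUnion _ _ (generateFrom _) _ fun q =>
    isOpen_generateFrom_of_mem ⟨q, _, hw.pos _, rfl⟩

end IsWeight

end Distance

section PerronFrobenius

variable {ρ : Fin k → ℝ} {xv : Fin N → ℝ} {δ : ℝ}

lemma src_le_mul_rg (hx : ∀ v, 0 ≤ xv v)
    (hxeig : ∀ i, ((A i).map (Nat.cast : ℕ → ℝ)).mulVec xv = ρ i • xv)
    {n : ℕ} (e : Edge k N A n) : xv e.src ≤ ρ n * xv e.rg := by
  rw [← sum_mul_eq_of_mulVec_eq (hxeig _)]
  calc xv e.src ≤ (A n e.rg e.src : ℝ) * xv e.src :=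
        le_mul_of_one_le_left (hx _) (Nat.one_le_cast.2 e.idx.pos)
    _ ≤ ∑ b, (A n e.rg b : ℝ) * xv b :=
        Finset.single_le_sum (f := fun b => (A n e.rg b : ℝ) * xv b)
          (fun b _ => mul_nonneg (Nat.cast_nonneg _) (hx b)) (Finset.mem_univ _)

lemma src_eq_mul_rg_of_unique
    (hxeig : ∀ i, ((A i).map (Nat.cast : ℕ → ℝ)).mulVec xv = ρ i • xv)
    {n : ℕ} (e : Edge k N A n) (huniq : ∀ e' : Edge k N A n, e'.rg = e.rg → e' = e) :
    xv e.src = ρ n * xv e.rg := by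
  have hzero : ∀ b ≠ e.src, A n e.rg b = 0 := fun b hb => Nat.eq_zero_of_not_pos fun hpos =>
    hb (congrArg Edge.src (huniq ⟨e.rg, b, ⟨0, hpos⟩⟩ rfl))
  have hone : A n e.rg e.src = 1 := by
    refine le_antisymm (not_lt.1 fun h2 => ?_) e.idx.pos
    have h01 := (huniq ⟨e.rg, e.src, ⟨0, by omega⟩⟩ rfl).trans
      (huniq ⟨e.rg, e.src, ⟨1, h2⟩⟩ rfl).symm
    simp only [Edge.mk.injEq, heq_eq_eq, true_and, Fin.mk.injEq] at h01
    exact zero_ne_one h01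
  rw [← sum_mul_eq_of_mulVec_eq (hxeig _), Finset.sum_eq_single e.src
    (fun b _ hb => by rw [hzero b hb, Nat.cast_zero, zero_mul]) (absurd (Finset.mem_univ _)),
    hone, Nat.cast_one, one_mul]

lemma exists_edge_ne (hρ : ∀ i, 1 < ρ i) (hxpos : ∀ v, 0 < xv v)
    (hxeig : ∀ i, ((A i).map (Nat.cast : ℕ → ℝ)).mulVec xv = ρ i • xv)
    (p : PathSpace k N A) (n : ℕ) :
    ∃ m ≥ n, ∃ e : Edge k N A m, e.rg = (p.1 m).rg ∧ e ≠ p.1 m := by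
  by_contra! huniq
  set c := Finset.univ.inf' Finset.univ_nonempty ρ
  have hc : 1 < c := (Finset.lt_inf'_iff _).2 fun i _ => hρ i
  have hgrow : Tendsto (fun j => xv (p.1 (n + j)).rg) atTop atTop := by
    refine tendsto_atTop_of_geom_le (hxpos _) hc fun j => ?_
    rw [← add_assoc, ← p.2,
      src_eq_mul_rg_of_unique hxeig _ (huniq (n + j) (Nat.le_add_right n j))]
    exact mul_le_mul_of_nonneg_right (Finset.inf'_le _ (Finset.mem_univ _)) (hxpos _).le
  obtain ⟨j, hj⟩ := (hgrow.eventually_gt_atTop (∑ v, xv v)).exists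
  exact hj.not_ge (Finset.single_le_sum (fun v _ => (hxpos v).le) (Finset.mem_univ _))

lemma perfect_univ (hrow : ∀ (i : Fin k) (a : Fin N), ∃ b, 0 < A i a b)
    (hρ : ∀ i, 1 < ρ i) (hxpos : ∀ v, 0 < xv v)
    (hxeig : ∀ i, ((A i).map (Nat.cast : ℕ → ℝ)).mulVec xv = ρ i • xv) :
    Perfect (univ : Set (PathSpace k N A)) := by
  refine ⟨isClosed_univ, fun p _ => accPt_iff_nhds.2 fun U hU => ?_⟩
  obtain ⟨n, -, hn⟩ := (nhds_basis_cyl_prefixPath p).mem_iff.1 hU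
  obtain ⟨m, hnm, e, he, hne⟩ := exists_edge_ne hρ hxpos hxeig p n
  have hg_rg : ∀ i, (Function.update p.1 m e i).rg = (p.1 i).rg := by
    intro i
    rcases eq_or_ne i m with rfl | hi
    · rw [Function.update_self, he]
    · rw [Function.update_of_ne hi]
  obtain ⟨y, hy⟩ := exists_path_eq_of_lt hrow (m + 1) (Function.update p.1 m e) fun i hi => by
    rw [hg_rg, Function.update_of_ne (by omega), p.2]
  refine ⟨y, ⟨hn (mem_cyl_prefixPath_iff.2 ⟨?_, fun i hi => ?_⟩), trivial⟩, fun hyp => ?_⟩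
  · rw [hy 0 (by omega), hg_rg]
  · rw [hy i (by omega), Function.update_of_ne (by omega)]
  · exact hne (by rw [← hyp, hy m (by omega), Function.update_self])

lemma nonempty_pathSpace [NeZero N] (hrow : ∀ (i : Fin k) (a : Fin N), ∃ b, 0 < A i a b) :
    Nonempty (PathSpace k N A) := by
  obtain ⟨y, -⟩ := exists_path_eq_of_lt hrow 0 (fun i => nextEdge hrow i 0) fun _ hi => by omega
  exact ⟨y⟩

lemma wt_eq (η : FB k N A) : wt δ ρ xv η = radiusProd ρ η.1 ^ (-(1 / δ)) * xv η.2.src := rfl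

lemma exponent_succ (i : Fin k) (n : ℕ) :
    (if (i : ℕ) < (n + 1) % k then (n + 1) / k + 1 else (n + 1) / k)
      = (if (i : ℕ) < n % k then n / k + 1 else n / k) + if i = (n : Fin k) then 1 else 0 := by
  have hk : 0 < k := Nat.pos_of_ne_zero (NeZero.ne k)
  have hdm := Nat.div_add_mod n k
  have hmod := Nat.mod_lt n hk
  obtain ⟨hdiv, hmod'⟩ : (n + 1) / k = n / k + (if n % k + 1 = k then 1 else 0) ∧
      (n + 1) % k = if n % k + 1 = k then 0 else n % k + 1 := by
    refine (Nat.div_mod_unique hk).2 ⟨?_, by split_ifs <;> omega⟩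
    rw [mul_add]
    split_ifs <;> omega
  simp only [hdiv, hmod', Fin.ext_iff, Fin.val_natCast]
  have := i.2
  split_ifs <;> omega

lemma radiusProd_succ (ρ : Fin k → ℝ) (n : ℕ) :
    radiusProd ρ (n + 1) = radiusProd ρ n * ρ n := by
  simp only [radiusProd, exponent_succ, pow_add, Finset.prod_mul_distrib, pow_ite, pow_one,
    pow_zero, Finset.prod_ite_eq', Finset.mem_univ, if_true]

lemma wt_prefixPath_succ_le (hρ : ∀ i, 1 ≤ ρ i) (hx : ∀ v, 0 ≤ xv v)
    (hxeig : ∀ i, ((A i).map (Nat.cast : ℕ → ℝ)).mulVec xv = ρ i • xv)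
    (p : PathSpace k N A) (n : ℕ) :
    wt δ ρ xv ⟨n + 1, prefixPath p (n + 1)⟩
      ≤ ρ n ^ (1 - 1 / δ) * wt δ ρ xv ⟨n, prefixPath p n⟩ := by
  have hP := zero_lt_one.trans_le (one_le_radiusProd hρ n)
  have hρn := zero_lt_one.trans_le (hρ n)
  have hsrc : (prefixPath p (n + 1)).src = (p.1 n).src := (p.2 n).symm
  rw [wt_eq, wt_eq, hsrc, radiusProd_succ, Real.mul_rpow hP.le hρn.le, sub_eq_neg_add,
    Real.rpow_add hρn, Real.rpow_one]
  calc radiusProd ρ n ^ (-(1 / δ)) * ρ n ^ (-(1 / δ)) * xv (p.1 n).src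
      ≤ radiusProd ρ n ^ (-(1 / δ)) * ρ n ^ (-(1 / δ)) * (ρ n * xv (p.1 n).rg) :=
        mul_le_mul_of_nonneg_left (src_le_mul_rg hx hxeig _) (by positivity)
    _ = _ := by simp only [prefixPath, FinPath.src, Fin.val_last]; ring

theorem isWeight_wt (hρ : ∀ i, 1 < ρ i) (hδ : δ ∈ Ioo (0 : ℝ) 1) (hxpos : ∀ v, 0 < xv v)
    (hxsum : ∑ v, xv v = 1)
    (hxeig : ∀ i, ((A i).map (Nat.cast : ℕ → ℝ)).mulVec xv = ρ i • xv) :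
    IsWeight (wt δ ρ xv : FB k N A → ℝ) := by
  have hρ1 : ∀ i, 1 ≤ ρ i := fun i => (hρ i).le
  have hexp : 1 - 1 / δ < 0 := sub_neg.2 (one_lt_one_div hδ.1 hδ.2)
  set c := Finset.univ.sup' Finset.univ_nonempty fun i => ρ i ^ (1 - 1 / δ)
  have hc0 : 0 ≤ c := Finset.le_sup'_of_le _ (Finset.mem_univ 0)
    (Real.rpow_nonneg (zero_le_one.trans (hρ1 0)) _)
  have hc1 : c < 1 :=
    (Finset.sup'_lt_iff _).2 fun i _ => Real.rpow_lt_one_of_one_lt_of_neg (hρ i) hexp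
  have hpos : ∀ η : FB k N A, 0 < wt δ ρ xv η := fun η =>
    mul_pos (Real.rpow_pos_of_pos (zero_lt_one.trans_le (one_le_radiusProd hρ1 _)) _) (hxpos _)
  have hstep : ∀ (p : PathSpace k N A) n,
      wt δ ρ xv ⟨n + 1, prefixPath p (n + 1)⟩ ≤ c * wt δ ρ xv ⟨n, prefixPath p n⟩ :=
    fun p n => (wt_prefixPath_succ_le hρ1 (fun v => (hxpos v).le) hxeig p n).trans <|
      mul_le_mul_of_nonneg_right (Finset.le_sup' (fun i => ρ i ^ (1 - 1 / δ))
        (Finset.mem_univ _)) (hpos _).le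
  refine ⟨hpos, fun η => ?_, fun p => antitone_nat_of_succ_le fun n =>
    (hstep p n).trans (mul_le_of_le_one_left (hpos _).le hc1.le), fun p => ?_⟩
  · exact mul_le_one₀ (Real.rpow_le_one_of_one_le_of_nonpos (one_le_radiusProd hρ1 _)
      (neg_nonpos.2 (one_div_nonneg.2 hδ.1.le))) (hxpos _).le
      (hxsum ▸ Finset.single_le_sum (fun v _ => (hxpos v).le) (Finset.mem_univ _))
  · set u := fun n => wt δ ρ xv ⟨n, prefixPath p n⟩
    have hgeom : ∀ n, u n ≤ c ^ n * u 0 := fun n => le_geom hc0 n fun j _ => hstep p j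
    refine squeeze_zero (fun n => (hpos _).le) hgeom ?_
    simpa using (tendsto_pow_atTop_nhds_zero_of_lt_one hc0 hc1).mul_const (u 0)

end PerronFrobenius

theorem statement4_general (k N : ℕ) [NeZero k] [NeZero N]
    (A : Fin k → Matrix (Fin N) (Fin N) ℕ)
    (hrow : ∀ (i : Fin k) (a : Fin N), ∃ b, 0 < A i a b)
    (ρ : Fin k → ℝ)
    (x : Fin N → ℝ) (hxpos : ∀ v, 0 < x v) (hxsum : ∑ v, x v = 1)
    (hxeig : ∀ i, ((A i).map (Nat.cast : ℕ → ℝ)).mulVec x = ρ i • x)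
    (δ : ℝ) (hδ : δ ∈ Set.Ioo (0 : ℝ) 1)
    (hρone : ∀ i, 1 < ρ i) :
    Nonempty (PathSpace k N A) ∧
    CompactSpace (PathSpace k N A) ∧
    TotallyDisconnectedSpace (PathSpace k N A) ∧
    Perfect (Set.univ : Set (PathSpace k N A)) ∧
    (∀ p q : PathSpace k N A, distW (wt δ ρ x) p q = distW (wt δ ρ x) q p) ∧
    (∀ p q : PathSpace k N A, distW (wt δ ρ x) p q = 0 ↔ p = q) ∧
    (∀ p q r : PathSpace k N A,
        distW (wt δ ρ x) p q ≤ max (distW (wt δ ρ x) p r) (distW (wt δ ρ x) r q)) ∧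
    TopologicalSpace.generateFrom { S : Set (PathSpace k N A) |
        ∃ (p : PathSpace k N A) (r : ℝ), 0 < r ∧ S = { q | distW (wt δ ρ x) p q < r } }
      = TopologicalSpace.generateFrom (cylinderSets k N A) := by
  have hw := isWeight_wt hρone hδ hxpos hxsum hxeig
  exact ⟨nonempty_pathSpace hrow, inferInstance, inferInstance,
    perfect_univ hrow hρone hxpos hxeig, distW_comm _, fun _ _ => hw.distW_eq_zero_iff,
    hw.distW_le_max, hw.generateFrom_balls_eq⟩

/-- Under the Perron–Frobenius hypotheses with all spectral radii
`> 1`, the infinite path space of the stationary `k`-Bratteli diagram, with the metric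
`d_δ = d_{w_δ}`, is an ultrametric Cantor set: nonempty, compact, perfect and totally
disconnected; `d_δ` is a metric satisfying the strong triangle inequality; and `d_δ`
induces the cylinder-set topology. -/
theorem statement4 (k N : ℕ) [NeZero k] [NeZero N]
    (A : Fin k → Matrix (Fin N) (Fin N) ℕ)
    (hcomm : ∀ i j, A i * A j = A j * A i)
    (hrow : ∀ (i : Fin k) (a : Fin N), ∃ b, 0 < A i a b)
    (hirr : IrreducibleFamily A)
    (ρ : Fin k → ℝ) (hρ : ∀ i, ρ i = specRad (A i))
    (x : Fin N → ℝ) (hxpos : ∀ v, 0 < x v) (hxsum : ∑ v, x v = 1)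
    (hxeig : ∀ i, ((A i).map (Nat.cast : ℕ → ℝ)).mulVec x = ρ i • x)
    (δ : ℝ) (hδ : δ ∈ Set.Ioo (0 : ℝ) 1)
    (hρone : ∀ i, 1 < ρ i) :
    Nonempty (PathSpace k N A) ∧
    CompactSpace (PathSpace k N A) ∧
    TotallyDisconnectedSpace (PathSpace k N A) ∧
    Perfect (Set.univ : Set (PathSpace k N A)) ∧
    (∀ p q : PathSpace k N A, distW (wt δ ρ x) p q = distW (wt δ ρ x) q p) ∧
    (∀ p q : PathSpace k N A, distW (wt δ ρ x) p q = 0 ↔ p = q) ∧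
    (∀ p q r : PathSpace k N A,
        distW (wt δ ρ x) p q ≤ max (distW (wt δ ρ x) p r) (distW (wt δ ρ x) r q)) ∧
    TopologicalSpace.generateFrom { S : Set (PathSpace k N A) |
        ∃ (p : PathSpace k N A) (r : ℝ), 0 < r ∧ S = { q | distW (wt δ ρ x) p q < r } }
      = TopologicalSpace.generateFrom (cylinderSets k N A) :=
  statement4_general k N A hrow ρ x hxpos hxsum hxeig δ hδ hρone

end KBratteli
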